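/- arXiv:2303.06584 — 2 statements merged into one kernel-verified Lean document; each statement's English description precedes it below -/
import Mathlib

section
/- The Gauss quadrature weights satisfy w_i · Σ_{k=0}^{n-1} π_k(x_i)² = 1 for each node x_i, where π_k are the orthonormal polynomials. -/
open Polynomial intervalIntegral
open scoped Matrix

/-!
Let `P` be the square matrix `P k j = π k (x j)` and `D` the diagonal matrix of the weights.
Each `π j * π k` with `j, k < n` has degree at most `2n - 2`, so the quadrature computes its
weighted integral exactly, and orthonormality becomes `P D Pᵀ = 1`. A one-sided inverse of a
square matrix is two-sided, hence also `Pᵀ P D = 1`, whose `(i, i)` entry is the claim.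
-/

namespace Matrix

variable {ι R : Type*} [Fintype ι] [DecidableEq ι] [CommRing R]

theorem transpose_mul_mul_diagonal_eq_one {P : Matrix ι ι R} {d : ι → R}
    (h : P * diagonal d * Pᵀ = 1) : Pᵀ * P * diagonal d = 1 := by
  rw [Matrix.mul_assoc]
  exact mul_eq_one_comm.mp h

theorem mul_sum_sq_col_eq_one_of_mul_diagonal_mul_transpose_eq_one {P : Matrix ι ι R}
    {d : ι → R} (h : P * diagonal d * Pᵀ = 1) (i : ι) : d i * ∑ k, P k i ^ 2 = 1 := by
  have hii := congr_fun₂ (transpose_mul_mul_diagonal_eq_one h) i i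
  rw [mul_diagonal, mul_apply, one_apply_eq] at hii
  simpa only [transpose_apply, sq, mul_comm (d i)] using hii

end Matrix

noncomputable def evalMatrix {R : Type*} [CommSemiring R] {n : ℕ} (π : ℕ → R[X])
    (x : Fin n → R) : Matrix (Fin n) (Fin n) R :=
  Matrix.of fun k j => (π k).eval (x j)

theorem evalMatrix_mul_diagonal_mul_transpose_eq_one {a b : ℝ} {w : ℝ → ℝ} {π : ℕ → ℝ[X]}
    (hdeg : ∀ k, (π k).natDegree ≤ k)
    (horthonormal : ∀ j k, (∫ t in a..b, w t * (π j).eval t * (π k).eval t) =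
      if j = k then 1 else 0)
    {n : ℕ} {x : Fin n → ℝ} {W : Fin n → ℝ}
    (hexact : ∀ f : ℝ[X], f.natDegree ≤ 2 * n - 1 →
      (∫ t in a..b, w t * f.eval t) = ∑ i : Fin n, W i * f.eval (x i)) :
    evalMatrix π x * Matrix.diagonal W * (evalMatrix π x)ᵀ = 1 := by
  ext j k
  have hdeg_mul : (π j * π k).natDegree ≤ 2 * n - 1 :=
    natDegree_mul_le.trans (by have := hdeg j; have := hdeg k; omega)
  have hquad := hexact _ hdeg_mul
  simp only [eval_mul, ← mul_assoc, horthonormal, Fin.val_inj] at hquad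
  rw [Matrix.one_apply, hquad, Matrix.mul_apply]
  refine Finset.sum_congr rfl fun i _ => ?_
  simp only [Matrix.mul_diagonal, evalMatrix, Matrix.transpose_apply, Matrix.of_apply]
  ring

theorem gauss_weights_christoffel_darboux_general
    (a b : ℝ) (w : ℝ → ℝ)
    (π : ℕ → Polynomial ℝ)
    (hdeg : ∀ k, (π k).natDegree = k)
    (horthonormal : ∀ j k, (∫ t in a..b, w t * (π j).eval t * (π k).eval t) =
      if j = k then 1 else 0)
    (n : ℕ)
    (x : Fin n → ℝ)
    (W : Fin n → ℝ)
    (hexact : ∀ f : Polynomial ℝ, f.natDegree ≤ 2 * n - 1 →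
      (∫ t in a..b, w t * f.eval t) = ∑ i : Fin n, W i * f.eval (x i)) :
    ∀ i : Fin n, W i * ∑ k ∈ Finset.range n, ((π k).eval (x i)) ^ 2 = 1 := by
  intro i
  rw [Finset.sum_range fun k => (π k).eval (x i) ^ 2]
  exact Matrix.mul_sum_sq_col_eq_one_of_mul_diagonal_mul_transpose_eq_one
    (evalMatrix_mul_diagonal_mul_transpose_eq_one (fun k => (hdeg k).le) horthonormal hexact) i

/-- The Gauss quadrature weights satisfy `w_i · Σ_{k=0}^{n-1} π_k(x_i)² = 1`, where the
`π_k` are the orthonormal polynomials for the positive weight `w` on `[a,b]`, the nodes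
`x i` are the zeros of `π n`, and the rule is exact for polynomials of degree ≤ 2n-1. -/
theorem gauss_weights_christoffel_darboux
    (a b : ℝ) (hab : a < b) (w : ℝ → ℝ)
    (hw : Continuous w) (hwpos : ∀ x ∈ Set.Icc a b, 0 < w x)
    (π : ℕ → Polynomial ℝ)
    (hdeg : ∀ k, (π k).natDegree = k)
    (horthonormal : ∀ j k, (∫ t in a..b, w t * (π j).eval t * (π k).eval t) =
      if j = k then 1 else 0)
    (n : ℕ) (hn : 1 ≤ n)
    (x : Fin n → ℝ) (hroots : ∀ i, (π n).IsRoot (x i))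
    (hinj : Function.Injective x)
    (W : Fin n → ℝ)
    (hexact : ∀ f : Polynomial ℝ, f.natDegree ≤ 2 * n - 1 →
      (∫ t in a..b, w t * f.eval t) = ∑ i : Fin n, W i * f.eval (x i)) :
    ∀ i : Fin n, W i * ∑ k ∈ Finset.range n, ((π k).eval (x i)) ^ 2 = 1 :=
  gauss_weights_christoffel_darboux_general a b w π hdeg horthonormal n x W hexact
end

section
/- If v = (π_0(x_i), π_1(x_i), …, π_{n-1}(x_i))ᵀ is the eigenvector of the Jacobi matrix M for eigenvalue x_i, normalized to unit Euclidean norm with first component q_0^{(i)}, then the Gauss quadrature weight satisfies w_i = (q_0^{(i)})² · ∫_a^b w(x) dx. -/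
open Polynomial intervalIntegral

theorem EuclideanSpace.sq_inv_norm_smul_apply {ι : Type*} [Fintype ι] (v : ι → ℝ) (i : ι) :
    ((‖(EuclideanSpace.equiv ι ℝ).symm v‖⁻¹ • v) i) ^ 2 = v i ^ 2 / ∑ k, v k ^ 2 := by
  rw [Pi.smul_apply, smul_eq_mul, mul_pow, inv_pow, inv_mul_eq_div,
    EuclideanSpace.real_norm_sq_eq]
  rfl

theorem gauss_weight_eq_first_component_sq_mul_integral_general
    (a b : ℝ) (w : ℝ → ℝ)
    (hwint : 0 < ∫ t in a..b, w t)
    (π : ℕ → Polynomial ℝ)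
    (hπ0 : π 0 = C (1 / Real.sqrt (∫ t in a..b, w t)))
    (n : ℕ) (hn : 1 ≤ n) (xi : ℝ)
    (v : Fin n → ℝ) (hv : ∀ k : Fin n, v k = (π (k : ℕ)).eval xi)
    (q : Fin n → ℝ) (hq : q = (‖(EuclideanSpace.equiv (Fin n) ℝ).symm v‖)⁻¹ • v)
    (Wi : ℝ)
    (hWi : Wi * ∑ k ∈ Finset.range n, ((π k).eval xi) ^ 2 = 1) :
    Wi = (q ⟨0, hn⟩) ^ 2 * ∫ t in a..b, w t := by
  have hsum : ∑ k, v k ^ 2 = ∑ k ∈ Finset.range n, ((π k).eval xi) ^ 2 := by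
    simp only [hv]
    exact Fin.sum_univ_eq_sum_range (fun k ↦ (π k).eval xi ^ 2) n
  have hv0 : v ⟨0, hn⟩ ^ 2 = (∫ t in a..b, w t)⁻¹ := by
    rw [hv, hπ0, eval_C, div_pow, Real.sq_sqrt hwint.le, one_pow, one_div]
  have hsum_ne : ∑ k ∈ Finset.range n, ((π k).eval xi) ^ 2 ≠ 0 :=
    right_ne_zero_of_mul_eq_one hWi
  rw [hq, EuclideanSpace.sq_inv_norm_smul_apply, hsum, hv0, eq_div_of_mul_eq hsum_ne hWi]
  field_simp

/-- If `v = (π_0(x_i), …, π_{n-1}(x_i))` is the Jacobi-matrix eigenvector for the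
eigenvalue `x_i`, normalized to unit Euclidean norm with first component `q₀`, then the
Gauss quadrature weight satisfies `w_i = q₀² ∫_a^b w`. Here `π_0 = 1/√(∫_a^b w)` and
`w_i` is defined by `w_i Σ_{k<n} π_k(x_i)² = 1`. -/
theorem gauss_weight_eq_first_component_sq_mul_integral
    (a b : ℝ) (hab : a < b) (w : ℝ → ℝ)
    (hwint : 0 < ∫ t in a..b, w t)
    (π : ℕ → Polynomial ℝ)
    (hπ0 : π 0 = C (1 / Real.sqrt (∫ t in a..b, w t)))
    (n : ℕ) (hn : 1 ≤ n) (xi : ℝ)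
    (hroot : (π n).IsRoot xi)
    (v : Fin n → ℝ) (hv : ∀ k : Fin n, v k = (π (k : ℕ)).eval xi)
    (q : Fin n → ℝ) (hq : q = (‖(EuclideanSpace.equiv (Fin n) ℝ).symm v‖)⁻¹ • v)
    (Wi : ℝ)
    (hWi : Wi * ∑ k ∈ Finset.range n, ((π k).eval xi) ^ 2 = 1) :
    Wi = (q ⟨0, hn⟩) ^ 2 * ∫ t in a..b, w t :=
  gauss_weight_eq_first_component_sq_mul_integral_general a b w hwint π hπ0 n hn xi v hv q hq Wi hWi
end
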